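/- Let k ≥ 1, H a complex Hilbert space, and A a k×k quantum magic square on H that cannot be positively perturbed. Define the (k+1)×(k+1) matrix A' over the bounded operators on H by A'_{i,j} = A_{i,j} for i,j ≤ k, A'_{k+1,k+1} = I_H, and A'_{i,j} = 0 in all other cases. Then A' is a (k+1)×(k+1) quantum magic square on H that cannot be positively perturbed. -/

import Mathlib

noncomputable section

instance piLpCompleteSpace {ι : Type} (p : ENNReal) (β : ι → Type)
    [∀ i, UniformSpace (β i)] [∀ i, CompleteSpace (β i)] :
    CompleteSpace (PiLp p β) :=
  inferInstance

structure HilbertC where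
  carrier : Type
  [normed : NormedAddCommGroup carrier]
  [ips : InnerProductSpace ℂ carrier]
  [complete : CompleteSpace carrier]

attribute [instance] HilbertC.normed HilbertC.ips HilbertC.complete

/-- The block operator on the Hilbert-space direct sum `⊕_{i ∈ ι} H` (realised as
`PiLp 2 (fun _ : ι => H)`) associated with a matrix `T` of bounded operators on `H`. -/
def blockOp {ι : Type} [Fintype ι] [DecidableEq ι]
    {H : Type} [NormedAddCommGroup H] [InnerProductSpace ℂ H] [CompleteSpace H]
    (T : ι → ι → H →L[ℂ] H) :
    PiLp 2 (fun _ : ι => H) →L[ℂ] PiLp 2 (fun _ : ι => H) :=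
  ((PiLp.continuousLinearEquiv 2 ℂ (fun _ : ι => H)).symm.toContinuousLinearMap).comp
    ((ContinuousLinearMap.pi
        (fun p => ∑ q, (T p q).comp (ContinuousLinearMap.proj q))).comp
      (PiLp.continuousLinearEquiv 2 ℂ (fun _ : ι => H)).toContinuousLinearMap)

/-- An `n × n` quantum magic square on the Hilbert space `H`. -/
def IsQMS {n : ℕ} {H : Type} [NormedAddCommGroup H] [InnerProductSpace ℂ H] [CompleteSpace H]
    (A : Fin n → Fin n → H →L[ℂ] H) : Prop :=
  (∀ i j, (A i j).IsPositive) ∧ (∀ i, ∑ k, A i k = 1) ∧ (∀ j, ∑ k, A k j = 1)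

/-- The blocks of the operator `φ(A)`: the `((i,j),(k,l))` block is
`δ_{(i,j),(k,l)} A_{i,j} − A_{i,j} A_{k,l}`. -/
def phiBlocks {n : ℕ} {H : Type} [NormedAddCommGroup H] [InnerProductSpace ℂ H] [CompleteSpace H]
    (A : Fin n → Fin n → H →L[ℂ] H) :
    (Fin n × Fin n) → (Fin n × Fin n) → H →L[ℂ] H :=
  fun p q => (if p = q then A p.1 p.2 else 0) - A p.1 p.2 * A q.1 q.2

/-- `A` can be positively perturbed: there is a self-adjoint block operator `X` whose
`((i,j),(k,l))` block vanishes whenever `i = k` or `j = l`, with `φ(A) + X ≥ 0`. -/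
def CanPerturb {n : ℕ} {H : Type} [NormedAddCommGroup H] [InnerProductSpace ℂ H] [CompleteSpace H]
    (A : Fin n → Fin n → H →L[ℂ] H) : Prop :=
  ∃ X : (Fin n × Fin n) → (Fin n × Fin n) → H →L[ℂ] H,
    IsSelfAdjoint (blockOp X) ∧
    (∀ p q : Fin n × Fin n, p.1 = q.1 ∨ p.2 = q.2 → X p q = 0) ∧
    (blockOp (phiBlocks A) + blockOp X).IsPositive

/-- `A` dilates to a quantum permutation matrix. -/
def DilatesToQPM {n : ℕ} {H : Type} [NormedAddCommGroup H] [InnerProductSpace ℂ H]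
    [CompleteSpace H] (A : Fin n → Fin n → H →L[ℂ] H) : Prop :=
  ∃ (K : HilbertC) (Vi : H →L[ℂ] K.carrier) (P : Fin n → Fin n → K.carrier →L[ℂ] K.carrier),
    Isometry Vi ∧
    (∀ i j, IsSelfAdjoint (P i j) ∧ IsIdempotentElem (P i j)) ∧
    (∀ i, ∑ k, P i k = 1) ∧ (∀ j, ∑ k, P k j = 1) ∧
    ∀ i j, A i j = (ContinuousLinearMap.adjoint Vi).comp ((P i j).comp Vi)

/-! The top-left `k × k` corner of `A'` is `A`. Pulling a block operator back along a map `e` of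
index sets is the compression `S† T S` of it by the operator `S` summing coordinates over the fibres
of `e`, and compressions preserve self-adjointness and positivity. Since the row and column
embeddings are injective, `φ(A)` is the pullback of `φ(A')`, so restricting a positive perturbation
of `A'` to the corner gives one of `A`. -/

open ContinuousLinearMap Finset

section BlockOperators

variable {H : Type} [NormedAddCommGroup H] [InnerProductSpace ℂ H] [CompleteSpace H]
  {ι κ : Type} [Fintype ι] [DecidableEq ι] [Fintype κ] [DecidableEq κ]

lemma blockOp_apply (T : ι → ι → H →L[ℂ] H) (x : PiLp 2 (fun _ : ι => H)) (p : ι) :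
    blockOp T x p = ∑ q, T p q (x q) := by
  simp [blockOp, _root_.sum_apply]

lemma inner_blockOp_apply (T : ι → ι → H →L[ℂ] H) (x y : PiLp 2 (fun _ : ι => H)) :
    inner ℂ (blockOp T x) y = ∑ p, ∑ q, inner ℂ (T p q (x q)) (y p) := by
  simp only [PiLp.inner_apply, blockOp_apply, sum_inner]

end BlockOperators

section SumFibers

variable {H : Type} [NormedAddCommGroup H] [InnerProductSpace ℂ H]
  {ι κ : Type} [Fintype ι] [DecidableEq κ]

def PiLp.sumFibers (e : ι → κ) : PiLp 2 (fun _ : ι => H) →L[ℂ] PiLp 2 (fun _ : κ => H) :=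
  (PiLp.continuousLinearEquiv 2 ℂ (fun _ : κ => H)).symm.toContinuousLinearMap ∘L
    ContinuousLinearMap.pi (fun b => ∑ a ∈ univ with e a = b, ContinuousLinearMap.proj a) ∘L
    (PiLp.continuousLinearEquiv 2 ℂ (fun _ : ι => H)).toContinuousLinearMap

lemma PiLp.sumFibers_apply (e : ι → κ) (x : PiLp 2 (fun _ : ι => H)) (b : κ) :
    PiLp.sumFibers e x b = ∑ a ∈ univ with e a = b, x a := by
  simp [PiLp.sumFibers, _root_.sum_apply]

end SumFibers

section BlockPullback

variable {H : Type} [NormedAddCommGroup H] [InnerProductSpace ℂ H] [CompleteSpace H]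
  {ι κ : Type} [Fintype ι] [DecidableEq ι] [Fintype κ] [DecidableEq κ]

lemma inner_blockOp_sumFibers (T : κ → κ → H →L[ℂ] H) (e : ι → κ)
    (x y : PiLp 2 (fun _ : ι => H)) :
    inner ℂ (blockOp T (PiLp.sumFibers e x)) (PiLp.sumFibers e y) =
      inner ℂ (blockOp (fun p q => T (e p) (e q)) x) y := by
  have sum_fibers (F : ι → κ → ℂ) : ∑ b, ∑ a ∈ univ with e a = b, F a b = ∑ a, F a (e a) := by
    rw [← sum_fiberwise univ e (fun a => F a (e a))]
    exact sum_congr rfl fun b _ => sum_congr rfl fun a ha => by rw [(mem_filter.1 ha).2]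
  simp only [inner_blockOp_apply, PiLp.sumFibers_apply, map_sum, sum_inner, inner_sum]
  rw [sum_congr rfl fun b _ => sum_comm]
  simp only [sum_fibers]

lemma blockOp_comp_eq_adjoint_conj (T : κ → κ → H →L[ℂ] H) (e : ι → κ) :
    blockOp (fun p q => T (e p) (e q)) =
      (PiLp.sumFibers e).adjoint ∘L blockOp T ∘L PiLp.sumFibers (H := H) e := by
  ext x : 1
  refine ext_inner_right ℂ fun y => ?_
  rw [comp_apply, adjoint_inner_left, comp_apply, inner_blockOp_sumFibers]

end BlockPullback

section Submatrix

variable {H : Type} [NormedAddCommGroup H] [InnerProductSpace ℂ H] [CompleteSpace H] {m n : ℕ}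

lemma phiBlocks_submatrix (A : Fin n → Fin n → H →L[ℂ] H) {f g : Fin m → Fin n}
    (hf : f.Injective) (hg : g.Injective) :
    phiBlocks (fun i j => A (f i) (g j)) =
      fun p q => phiBlocks A (Prod.map f g p) (Prod.map f g q) := by
  funext p q
  simp only [phiBlocks, Prod.map_fst, Prod.map_snd, (hf.prodMap hg).eq_iff]

lemma CanPerturb.submatrix {A : Fin n → Fin n → H →L[ℂ] H} {f g : Fin m → Fin n}
    (hf : f.Injective) (hg : g.Injective) (hA : CanPerturb A) :
    CanPerturb (fun i j => A (f i) (g j)) := by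
  obtain ⟨X, hX, hX_zero, hpos⟩ := hA
  refine ⟨fun p q => X (Prod.map f g p) (Prod.map f g q), ?_, ?_, ?_⟩
  · rw [blockOp_comp_eq_adjoint_conj]
    exact hX.adjoint_conj _
  · rintro p q (h | h) <;> apply hX_zero <;> simp [h]
  · rw [phiBlocks_submatrix A hf hg, blockOp_comp_eq_adjoint_conj (phiBlocks A),
      blockOp_comp_eq_adjoint_conj X, ← comp_add, ← add_comp]
    exact hpos.adjoint_conj _

end Submatrix

section DirectSumOne

variable {H : Type} [NormedAddCommGroup H] [InnerProductSpace ℂ H] {k : ℕ}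

def directSumOne (A : Fin k → Fin k → H →L[ℂ] H) : Fin (k + 1) → Fin (k + 1) → H →L[ℂ] H :=
  fun i j =>
    if hi : (i : ℕ) < k then
      (if hj : (j : ℕ) < k then A ⟨i, hi⟩ ⟨j, hj⟩ else 0)
    else
      (if (j : ℕ) < k then 0 else 1)

variable (A : Fin k → Fin k → H →L[ℂ] H)

@[simp] lemma directSumOne_castSucc_castSucc (i j : Fin k) :
    directSumOne A i.castSucc j.castSucc = A i j := by
  simp [directSumOne]

@[simp] lemma directSumOne_castSucc_last (i : Fin k) :
    directSumOne A i.castSucc (Fin.last k) = 0 := by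
  simp [directSumOne]

@[simp] lemma directSumOne_last_castSucc (j : Fin k) :
    directSumOne A (Fin.last k) j.castSucc = 0 := by
  simp [directSumOne]

@[simp] lemma directSumOne_last_last : directSumOne A (Fin.last k) (Fin.last k) = 1 := by
  simp [directSumOne]

variable {A} [CompleteSpace H]

lemma IsQMS.directSumOne (hA : IsQMS A) : IsQMS (directSumOne A) := by
  obtain ⟨hpos, hrow, hcol⟩ := hA
  refine ⟨fun i j => ?_, fun i => ?_, fun j => ?_⟩
  · induction i using Fin.lastCases <;> induction j using Fin.lastCases <;>
      simp [hpos, isPositive_zero, isPositive_one]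
  · induction i using Fin.lastCases <;> simp [Fin.sum_univ_castSucc, hrow]
  · induction j using Fin.lastCases <;> simp [Fin.sum_univ_castSucc, hcol]

end DirectSumOne

theorem stmt5_general (k : ℕ)
    (H : Type) [NormedAddCommGroup H] [InnerProductSpace ℂ H] [CompleteSpace H]
    (A : Fin k → Fin k → H →L[ℂ] H) (hA : IsQMS A) (hnp : ¬ CanPerturb A)
    (A' : Fin (k + 1) → Fin (k + 1) → H →L[ℂ] H)
    (hA' : ∀ i j : Fin (k + 1), A' i j =
      if hi : (i : ℕ) < k then
        (if hj : (j : ℕ) < k then A ⟨i, hi⟩ ⟨j, hj⟩ else 0)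
      else
        (if (j : ℕ) < k then 0 else 1)) :
    IsQMS A' ∧ ¬ CanPerturb A' := by
  obtain rfl : A' = directSumOne A := funext fun i => funext (hA' i)
  refine ⟨hA.directSumOne, fun h => hnp ?_⟩
  simpa using h.submatrix (Fin.castSucc_injective k) (Fin.castSucc_injective k)

theorem stmt5 (k : ℕ) (hk : 1 ≤ k)
    (H : Type) [NormedAddCommGroup H] [InnerProductSpace ℂ H] [CompleteSpace H]
    (A : Fin k → Fin k → H →L[ℂ] H) (hA : IsQMS A) (hnp : ¬ CanPerturb A)
    (A' : Fin (k + 1) → Fin (k + 1) → H →L[ℂ] H)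
    (hA' : ∀ i j : Fin (k + 1), A' i j =
      if hi : (i : ℕ) < k then
        (if hj : (j : ℕ) < k then A ⟨i, hi⟩ ⟨j, hj⟩ else 0)
      else
        (if (j : ℕ) < k then 0 else 1)) :
    IsQMS A' ∧ ¬ CanPerturb A' :=
  stmt5_general k H A hA hnp A' hA'
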